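/- Let φ : ℕ → (0,∞) be monotonically increasing with φ(n) → ∞ as n → ∞. If limsup_{n→∞} n/φ(n) = +∞, then the set E_max^φ = {x ∈ [0,1] : liminf_{n→∞} r_n(x)/φ(n) = 0 and limsup_{n→∞} r_n(x)/φ(n) = +∞} has Hausdorff dimension 1. -/

import Mathlib

open Filter MeasureTheory Set

/-- The `k`-th binary digit (for `k ≥ 1`) of a real number `x`,
namely `x_k = ⌊x * 2^k⌋ mod 2`, so that `x = Σ_{k ≥ 1} x_k / 2^k` for `x ∈ [0,1)`. -/
noncomputable def dyadicDigit (x : ℝ) (k : ℕ) : ℕ :=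
  ⌊x * 2 ^ k⌋.toNat % 2

/-- The run-length function: `runLen x n` is the length of the longest run of `1`'s
among the first `n` dyadic digits `x_1, …, x_n` of `x`. -/
noncomputable def runLen (x : ℝ) (n : ℕ) : ℕ :=
  sSup {ℓ : ℕ | ∃ i, i + ℓ ≤ n ∧ ∀ j < ℓ, dyadicDigit x (i + j + 1) = 1}

/-- The exceptional set `E_max^φ` of points of `[0,1]` where `r_n(x)/φ(n)` has
liminf `0` and limsup `+∞`. -/
noncomputable def Emax (φ : ℕ → ℝ) : Set ℝ :=
  {x ∈ Set.Icc (0 : ℝ) 1 |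
    atTop.liminf (fun n => ((runLen x n / φ n : ℝ) : EReal)) = 0 ∧
    atTop.limsup (fun n => ((runLen x n / φ n : ℝ) : EReal)) = ⊤}

/-!
Fix `m ≥ 3`. Block `k` is a run of `len k ≥ k φ(n_k)` digits forced to be `1`, ending at `n_k`;
the blocks are chosen so sparse that they are short compared with their position, while `φ` at
the start of block `k + 1` exceeds `(k + 1) (n_k + m)` (possible because `n / φ n` is unbounded
and `φ → ∞`). All other digits at multiples of `m` are forced to be `0`. For a point with these
forced digits, `r_n / φ n ≥ k` at `n = n_k`, whereas at the start of block `k + 1` every run of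
`1`s is cut by a forced zero, so `r_n / φ n ≤ 1 / (k + 1)`: such points lie in `E_max^φ`.

At least a proportion `1 - 2 / m` of the first `n` digits are free, and two such points whose
digits first differ at `n` agree again at the next multiple of `m`, so they are at distance at
least `2^-(n + m + 1)`. Hence the map reading off the free digits is `(1 - 2 / m)`-Hölder on the
set of such points, and it maps this set onto `[0, 1)`. So `dim_H E_max^φ ≥ 1 - 2 / m` for
every `m`.
-/

open Real
open scoped NNReal ENNReal

namespace Real

lemma floor_mul_two_pow_succ {x : ℝ} (hx : 0 ≤ x) (k : ℕ) :
    ⌊x * 2 ^ (k + 1)⌋₊ = 2 * ⌊x * 2 ^ k⌋₊ + digits x 2 k := by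
  have hx' : 0 ≤ x * 2 ^ k := by positivity
  have h₁ : 2 * ⌊x * 2 ^ k⌋₊ ≤ ⌊x * 2 ^ (k + 1)⌋₊ := by
    rw [Nat.le_floor_iff (by positivity), pow_succ]
    push_cast
    nlinarith [Nat.floor_le hx']
  have h₂ : ⌊x * 2 ^ (k + 1)⌋₊ < 2 * ⌊x * 2 ^ k⌋₊ + 2 := by
    rw [Nat.floor_lt (by positivity), pow_succ]
    push_cast
    nlinarith [Nat.lt_floor_add_one (x * 2 ^ k)]
  simp only [digits, Fin.val_ofNat, Nat.cast_ofNat]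
  omega

lemma digits_add_div_two_succ {y : ℝ} (hy : 0 ≤ y) (d k : ℕ) :
    digits ((d + y) / 2) 2 (k + 1) = digits y 2 k := by
  have h : (d + y) / 2 * 2 ^ (k + 1 + 1) = y * 2 ^ (k + 1) + (2 * (d * 2 ^ k) : ℕ) := by
    push_cast
    ring
  ext
  simp only [digits, Fin.val_ofNat, Nat.cast_ofNat]
  rw [h, Nat.floor_add_natCast (by positivity)]
  omega

lemma digits_add_div_two_zero {y : ℝ} (hy : y ∈ Ico 0 1) (d : Fin 2) :
    digits ((d + y) / 2) 2 0 = d := by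
  have h : (d + y) / 2 * 2 ^ (0 + 1) = y + (d : ℕ) := by ring
  ext
  simp only [digits, Fin.val_ofNat, Nat.cast_ofNat]
  rw [h, Nat.floor_add_natCast hy.1, Nat.floor_eq_zero.2 hy.2]
  omega

lemma ofDigits_eq_add_div_two (a : ℕ → Fin 2) :
    ofDigits a = (((a 0 : ℕ) : ℝ) + ofDigits fun i ↦ a (i + 1)) / 2 := by
  rw [ofDigits_eq_sum_add_ofDigits a 1]
  simp [ofDigitsTerm]
  ring

lemma ofDigits_lt_one {a : ℕ → Fin 2} (h : ∃ p, a p = 0) : ofDigits a < 1 := by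
  obtain ⟨p, hp⟩ := h
  rw [← ofDigits_const_last_eq_one 1]
  refine Summable.tsum_lt_tsum (i := p) (fun i ↦ ?_) ?_ summable_ofDigitsTerm
    summable_ofDigitsTerm
  · simp only [ofDigitsTerm]
    gcongr
    exact_mod_cast Fin.le_last (a i)
  · simp [ofDigitsTerm, hp]

lemma digits_ofDigits {a : ℕ → Fin 2} (h : ∃ᶠ p in atTop, a p = 0) :
    digits (ofDigits a) 2 = a := by
  have tail {a : ℕ → Fin 2} (h : ∃ᶠ p in atTop, a p = 0) : ∃ᶠ p in atTop, a (p + 1) = 0 := by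
    rwa [← map_add_atTop_eq_nat 1, frequently_map] at h
  funext k
  induction k generalizing a with
  | zero =>
    rw [ofDigits_eq_add_div_two]
    exact digits_add_div_two_zero ⟨ofDigits_nonneg _, ofDigits_lt_one (tail h).exists⟩ _
  | succ k ih =>
    rw [ofDigits_eq_add_div_two, digits_add_div_two_succ (ofDigits_nonneg _), ih (tail h)]

/-- The equal digits at `q` stop a carry in `y` from catching up with the `1` of `x` at `n`. -/
lemma inv_two_pow_le_sub_of_digits {x y : ℝ} (hx : x ∈ Ico 0 1) (hy : y ∈ Ico 0 1) {n q : ℕ}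
    (hagree : ∀ p < n, digits x 2 p = digits y 2 p) (hxn : digits x 2 n = 1)
    (hyn : digits y 2 n = 0) (hnq : n < q) (hq : digits x 2 q = digits y 2 q) :
    ((2 : ℝ) ^ (q + 1))⁻¹ ≤ x - y := by
  have hfloor_eq : ∀ k ≤ n, ⌊x * 2 ^ k⌋₊ = ⌊y * 2 ^ k⌋₊ := by
    intro k hk
    induction k with
    | zero => simp [Nat.floor_eq_zero.2 hx.2, Nat.floor_eq_zero.2 hy.2]
    | succ k ih =>
      rw [floor_mul_two_pow_succ hx.1, floor_mul_two_pow_succ hy.1, ih (by omega),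
        hagree k (by omega)]
  have hfloor_lt : ∀ k, n + 1 ≤ k → k ≤ q → ⌊y * 2 ^ k⌋₊ + 1 ≤ ⌊x * 2 ^ k⌋₊ := by
    intro k hk
    induction k, hk using Nat.le_induction with
    | base =>
      intro _
      rw [floor_mul_two_pow_succ hx.1, floor_mul_two_pow_succ hy.1, hfloor_eq n le_rfl, hxn, hyn]
      simp
    | succ k hk ih =>
      intro hkq
      rw [floor_mul_two_pow_succ hx.1, floor_mul_two_pow_succ hy.1]
      have := ih (by omega)
      have := (digits y 2 k).isLt
      omega
  have hfloor : ⌊y * 2 ^ (q + 1)⌋₊ + 2 ≤ ⌊x * 2 ^ (q + 1)⌋₊ := by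
    rw [floor_mul_two_pow_succ hx.1, floor_mul_two_pow_succ hy.1, hq]
    have := hfloor_lt q (by omega) le_rfl
    omega
  have hfloor' : (⌊y * 2 ^ (q + 1)⌋₊ : ℝ) + 2 ≤ ⌊x * 2 ^ (q + 1)⌋₊ := by exact_mod_cast hfloor
  have hx' := Nat.floor_le (mul_nonneg hx.1 (pow_nonneg zero_le_two (q + 1)))
  have hy' := Nat.lt_floor_add_one (y * 2 ^ (q + 1))
  rw [inv_le_iff_one_le_mul₀ (by positivity)]
  nlinarith

end Real

lemma dyadicDigit_succ (x : ℝ) (k : ℕ) : dyadicDigit x (k + 1) = digits x 2 k := by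
  simp [dyadicDigit, Real.digits, Int.floor_toNat]

def runLengths (x : ℝ) (n : ℕ) : Set ℕ :=
  {ℓ | ∃ i, i + ℓ ≤ n ∧ ∀ j < ℓ, digits x 2 (i + j) = 1}

lemma runLen_eq (x : ℝ) (n : ℕ) : runLen x n = sSup (runLengths x n) := by
  simp only [runLen, runLengths, dyadicDigit_succ, Fin.ext_iff, Fin.val_one]

lemma bddAbove_runLengths (x : ℝ) (n : ℕ) : BddAbove (runLengths x n) := by
  refine ⟨n, ?_⟩
  rintro ℓ ⟨i, hi, -⟩
  omega

lemma exists_run_runLen (x : ℝ) (n : ℕ) :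
    ∃ i, i + runLen x n ≤ n ∧ ∀ j < runLen x n, digits x 2 (i + j) = 1 := by
  rw [runLen_eq]
  exact Nat.sSup_mem (s := runLengths x n) ⟨0, 0, by simp⟩ (bddAbove_runLengths x n)

lemma le_runLen {x : ℝ} {n i ℓ : ℕ} (hn : i + ℓ ≤ n)
    (hrun : ∀ j < ℓ, digits x 2 (i + j) = 1) : ℓ ≤ runLen x n := by
  rw [runLen_eq]
  exact le_csSup (bddAbove_runLengths x n) ⟨i, hn, hrun⟩

namespace EReal

variable {α : Type*} {f : Filter α} {u : α → ℝ}

lemma liminf_coe_eq_zero (h0 : ∀ᶠ a in f, 0 ≤ u a) (h : ∀ ε > 0, ∃ᶠ a in f, u a ≤ ε) :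
    liminf (fun a ↦ (u a : EReal)) f = 0 := by
  refine le_antisymm (le_of_forall_lt_iff_le.1 fun ε hε ↦ ?_)
    (le_liminf_of_le (by isBoundedDefault) (h0.mono fun a ha ↦ by exact_mod_cast ha))
  exact liminf_le_of_frequently_le'
    ((h ε (by exact_mod_cast hε)).mono fun a ha ↦ by exact_mod_cast ha)

lemma limsup_coe_eq_top (h : ∀ M : ℝ, ∃ᶠ a in f, M ≤ u a) :
    limsup (fun a ↦ (u a : EReal)) f = ⊤ := by
  refine (eq_top_iff_forall_lt _).2 fun M ↦ (?_ : (M : EReal) < (M + 1 : ℝ)).trans_le ?_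
  · exact_mod_cast lt_add_one M
  · exact le_limsup_of_frequently_le' ((h (M + 1)).mono fun a ha ↦ by exact_mod_cast ha)

end EReal

lemma Nat.exists_dvd_mem_Ico {m : ℕ} (hm : 0 < m) (i : ℕ) : ∃ q ∈ Ico i (i + m), m ∣ q := by
  refine ⟨m * ((i + m - 1) / m), ?_, dvd_mul_right _ _⟩
  have h := Nat.div_add_mod (i + m - 1) m
  have := Nat.mod_lt (i + m - 1) hm
  generalize m * ((i + m - 1) / m) = q at h ⊢
  constructor <;> omega

lemma holderOnWith_of_dist_le {X Y : Type*} [PseudoMetricSpace X] [PseudoMetricSpace Y]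
    {C r : ℝ≥0} {f : X → Y} {s : Set X}
    (h : ∀ x ∈ s, ∀ y ∈ s, dist (f x) (f y) ≤ C * dist x y ^ (r : ℝ)) :
    HolderOnWith C r f s := by
  intro x hx y hy
  rw [edist_dist, edist_dist, ENNReal.ofReal_rpow_of_nonneg dist_nonneg r.coe_nonneg,
    ← ENNReal.ofReal_coe_nnreal, ← ENNReal.ofReal_mul C.coe_nonneg]
  exact ENNReal.ofReal_le_ofReal (h x hx y hy)

lemma inv_two_pow_le_mul_rpow {F n c : ℕ} {r d : ℝ} (hr0 : 0 ≤ r) (hr1 : r ≤ 1)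
    (hF : r * n - 1 ≤ F) (hd : ((2 : ℝ) ^ (n + c))⁻¹ ≤ d) :
    ((2 : ℝ) ^ F)⁻¹ ≤ 2 ^ (c + 1) * d ^ r := by
  have hpow : ((2 : ℝ) ^ (n + c))⁻¹ ^ r = (2 : ℝ) ^ (-(r * (n + c))) := by
    rw [← Real.rpow_natCast, Real.inv_rpow (by positivity), ← Real.rpow_mul (by norm_num),
      Real.rpow_neg (by norm_num)]
    push_cast
    ring_nf
  have hc : r * c ≤ c := by nlinarith
  calc ((2 : ℝ) ^ F)⁻¹ = (2 : ℝ) ^ (-(F : ℝ)) := by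
        rw [Real.rpow_neg (by norm_num), Real.rpow_natCast]
    _ ≤ (2 : ℝ) ^ ((c + 1 : ℕ) + -(r * (n + c))) :=
        Real.rpow_le_rpow_of_exponent_le (by norm_num) (by push_cast; nlinarith)
    _ = 2 ^ (c + 1) * ((2 : ℝ) ^ (n + c))⁻¹ ^ r := by
        rw [Real.rpow_add (by norm_num), Real.rpow_natCast, hpow]
    _ ≤ 2 ^ (c + 1) * d ^ r := by gcongr

/-- Block `k` is the set of digit positions `[start k, start k + len k)`; position `p` is the
digit `digits x 2 p`, that is `dyadicDigit x (p + 1)`. -/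
structure BlockLayout (m : ℕ) where
  start : ℕ → ℕ
  len : ℕ → ℕ
  start_zero : start 0 = 0
  gap : ∀ k, start k + len k + m ≤ start (k + 1)
  sparse : ∀ k, m * ∑ j ∈ Finset.range (k + 1), len j ≤ start k

namespace BlockLayout

variable {m : ℕ} (B : BlockLayout m)

def InBlock (p : ℕ) : Prop := ∃ k, B.start k ≤ p ∧ p < B.start k + B.len k

def IsFree (p : ℕ) : Prop := ¬ m ∣ p ∧ ¬ B.InBlock p

def moranSet : Set ℝ :=
  {x ∈ Ico 0 1 | ∀ p, (B.InBlock p → digits x 2 p = 1) ∧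
    (m ∣ p → ¬ B.InBlock p → digits x 2 p = 0)}

open Classical in
noncomputable def fill (c : ℕ → Fin 2) (p : ℕ) : Fin 2 :=
  if B.InBlock p then 1 else if m ∣ p then 0 else c p

noncomputable def collapse (x : ℝ) : ℝ :=
  ofDigits fun i ↦ digits x 2 (Nat.nth B.IsFree i)

lemma start_mono : Monotone B.start :=
  monotone_nat_of_le_succ fun k ↦ by have := B.gap k; omega

lemma start_strictMono (hm : 0 < m) : StrictMono B.start :=
  strictMono_nat_of_lt_succ fun k ↦ by have := B.gap k; omega

lemma not_inBlock_of_mem_gap {k p : ℕ} (h₁ : B.start k + B.len k ≤ p)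
    (h₂ : p < B.start (k + 1)) : ¬ B.InBlock p := by
  rintro ⟨j, hj, hpj⟩
  have hjk : j < k + 1 := B.start_mono.reflect_lt (by omega)
  rcases (Nat.lt_succ_iff.1 hjk).lt_or_eq with hjk | rfl
  · have := B.gap j
    have := B.start_mono (show j + 1 ≤ k by omega)
    omega
  · omega

lemma exists_start_le_lt (hm : 0 < m) (n : ℕ) : ∃ k, B.start k ≤ n ∧ n < B.start (k + 1) := by
  have hex : ∃ k, n < B.start (k + 1) :=
    ⟨n, (Nat.lt_succ_self n).trans_le ((B.start_strictMono hm).id_le _)⟩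
  refine ⟨Nat.find hex, ?_, Nat.find_spec hex⟩
  rcases h : Nat.find hex with _ | k
  · simp [B.start_zero]
  · exact not_lt.1 (Nat.find_min hex (by omega))

lemma len_le_runLen {x : ℝ} (hx : x ∈ B.moranSet) (k : ℕ) :
    B.len k ≤ runLen x (B.start k + B.len k) :=
  le_runLen le_rfl fun j hj ↦ (hx.2 _).1 ⟨k, by omega, by omega⟩

lemma runLen_start_succ_lt (hm : 0 < m) {x : ℝ} (hx : x ∈ B.moranSet) (k : ℕ) :
    runLen x (B.start (k + 1)) < B.start k + B.len k + m := by
  obtain ⟨i, hi, hrun⟩ := exists_run_runLen x (B.start (k + 1))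
  by_contra! hlong
  obtain ⟨q, ⟨hiq, hqi⟩, hmq⟩ := Nat.exists_dvd_mem_Ico hm (max i (B.start k + B.len k))
  have hq0 : digits x 2 q = 0 :=
    (hx.2 q).2 hmq (B.not_inBlock_of_mem_gap (k := k) (by omega) (by omega))
  have hq1 := hrun (q - i) (by omega)
  rw [Nat.add_sub_cancel' (by omega), hq0] at hq1
  exact absurd hq1 (by decide)

/-- `long` gives `r_n / φ n ≥ k` at the end of block `k`, `short` gives `r_n / φ n ≤ 1 / (k + 1)`
at the start of block `k + 1`. -/
structure Adapted (φ : ℕ → ℝ) : Prop where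
  long : ∀ k, k * φ (B.start k + B.len k) ≤ B.len k
  short : ∀ k, (k + 1) * ((B.start k + B.len k + m : ℕ) : ℝ) ≤ φ (B.start (k + 1))

section Adapted

variable {B} {φ : ℕ → ℝ}

lemma Adapted.runLen_div_le (hB : B.Adapted φ) (hm : 0 < m) {x : ℝ} (hx : x ∈ B.moranSet)
    (k : ℕ) : runLen x (B.start (k + 1)) / φ (B.start (k + 1)) ≤ 1 / (k + 1) := by
  have hrun : (runLen x (B.start (k + 1)) : ℝ) ≤ (B.start k + B.len k + m : ℕ) := by
    exact_mod_cast (B.runLen_start_succ_lt hm hx k).le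
  have hlen : (0 : ℝ) < (B.start k + B.len k + m : ℕ) := by exact_mod_cast (by omega)
  have hshort := hB.short k
  rw [div_le_div_iff₀ (by nlinarith) (by positivity)]
  nlinarith

lemma Adapted.moranSet_subset_Emax (hB : B.Adapted φ) (hm : 0 < m)
    (hφ : ∀ᶠ n in atTop, 0 < φ n) : B.moranSet ⊆ Emax φ := by
  intro x hx
  have hstart : Tendsto B.start atTop atTop := (B.start_strictMono hm).tendsto_atTop
  have hend : Tendsto (fun k ↦ B.start k + B.len k) atTop atTop :=
    tendsto_atTop_mono (fun k ↦ Nat.le_add_right _ _) hstart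
  refine ⟨Ico_subset_Icc_self hx.1, EReal.liminf_coe_eq_zero ?_ ?_, EReal.limsup_coe_eq_top ?_⟩
  · filter_upwards [hφ] with n hn using div_nonneg (Nat.cast_nonneg _) hn.le
  · intro ε hε
    refine (hstart.comp (tendsto_add_atTop_nat 1)).frequently (Eventually.frequently ?_)
    filter_upwards [tendsto_one_div_add_atTop_nhds_zero_nat.eventually (ge_mem_nhds hε)] with k hk
    exact (hB.runLen_div_le hm hx k).trans hk
  · intro M
    refine hend.frequently (Eventually.frequently ?_)
    filter_upwards [hend.eventually hφ, eventually_ge_atTop ⌈M⌉₊] with k hk hMk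
    calc M ≤ k := (Nat.le_ceil M).trans (by exact_mod_cast hMk)
      _ ≤ B.len k / φ (B.start k + B.len k) := (le_div_iff₀ hk).2 (hB.long k)
      _ ≤ _ := by gcongr; exact_mod_cast B.len_le_runLen hx k

end Adapted

lemma digits_eq_of_dvd {x y : ℝ} (hx : x ∈ B.moranSet) (hy : y ∈ B.moranSet) {q : ℕ}
    (hq : m ∣ q) : digits x 2 q = digits y 2 q := by
  by_cases hb : B.InBlock q
  · rw [(hx.2 q).1 hb, (hy.2 q).1 hb]
  · rw [(hx.2 q).2 hq hb, (hy.2 q).2 hq hb]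

lemma inv_two_pow_le_abs_sub (hm : 0 < m) {x y : ℝ} (hx : x ∈ B.moranSet)
    (hy : y ∈ B.moranSet) {n : ℕ} (hagree : ∀ p < n, digits x 2 p = digits y 2 p)
    (hn : digits x 2 n ≠ digits y 2 n) : ((2 : ℝ) ^ (n + (m + 1)))⁻¹ ≤ |x - y| := by
  obtain ⟨q, ⟨hnq, hqn⟩, hmq⟩ := Nat.exists_dvd_mem_Ico hm (n + 1)
  have hq := B.digits_eq_of_dvd hx hy hmq
  have hpow : ((2 : ℝ) ^ (n + (m + 1)))⁻¹ ≤ ((2 : ℝ) ^ (q + 1))⁻¹ :=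
    inv_anti₀ (by positivity) (pow_le_pow_right₀ one_le_two (by omega))
  have hcases : ∀ a b : Fin 2, a ≠ b → a = 1 ∧ b = 0 ∨ a = 0 ∧ b = 1 := by decide
  rcases hcases _ _ hn with ⟨hxn, hyn⟩ | ⟨hxn, hyn⟩
  · refine hpow.trans ((inv_two_pow_le_sub_of_digits hx.1 hy.1 hagree hxn hyn ?_ hq).trans
      (le_abs_self _))
    omega
  · rw [abs_sub_comm]
    refine hpow.trans ((inv_two_pow_le_sub_of_digits hy.1 hx.1 (fun p hp ↦ (hagree p hp).symm)
      hyn hxn ?_ hq.symm).trans (le_abs_self _))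
    omega

lemma frequently_fill_eq_zero (hm : 0 < m) (c : ℕ → Fin 2) : ∃ᶠ p in atTop, B.fill c p = 0 := by
  refine frequently_atTop.2 fun N ↦ ?_
  obtain ⟨q, ⟨hNq, hqN⟩, hmq⟩ := Nat.exists_dvd_mem_Ico hm (B.start N + B.len N)
  have hN : N ≤ B.start N := (B.start_strictMono hm).id_le N
  have hgap := B.gap N
  refine ⟨q, by omega, ?_⟩
  rw [fill, if_neg (B.not_inBlock_of_mem_gap hNq (by omega)), if_pos hmq]

lemma ofDigits_fill_mem_moranSet (hm : 0 < m) (c : ℕ → Fin 2) :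
    ofDigits (B.fill c) ∈ B.moranSet := by
  have hzero := B.frequently_fill_eq_zero hm c
  refine ⟨⟨ofDigits_nonneg _, ofDigits_lt_one hzero.exists⟩, fun p ↦ ?_⟩
  rw [digits_ofDigits hzero, fill]
  exact ⟨fun hp ↦ by rw [if_pos hp], fun hmp hp ↦ by rw [if_neg hp, if_pos hmp]⟩

section FreeDigits

open scoped Classical

lemma mul_count_inBlock_le (hm : 0 < m) (n : ℕ) : m * Nat.count B.InBlock n ≤ n := by
  obtain ⟨k, hkn, hnk⟩ := B.exists_start_le_lt hm n
  have hsub : (Finset.range n).filter B.InBlock ⊆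
      (Finset.range (k + 1)).biUnion fun j ↦ Finset.Ico (B.start j) (B.start j + B.len j) := by
    intro p hp
    simp only [Finset.mem_filter, Finset.mem_range] at hp
    obtain ⟨hpn, j, hj, hpj⟩ := hp
    simp only [Finset.mem_biUnion, Finset.mem_range, Finset.mem_Ico]
    exact ⟨j, B.start_mono.reflect_lt (by omega), hj, hpj⟩
  calc m * Nat.count B.InBlock n ≤ m * ∑ j ∈ Finset.range (k + 1), B.len j := by
        rw [Nat.count_eq_card_filter_range]
        gcongr
        refine (Finset.card_le_card hsub).trans (Finset.card_biUnion_le.trans ?_)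
        simp
    _ ≤ n := (B.sparse k).trans hkn

lemma le_count_isFree (hm : 0 < m) (n : ℕ) : n ≤ Nat.count B.IsFree n + 2 * (n / m) + 1 := by
  have hdvd : Nat.count (m ∣ ·) n ≤ n / m + 1 := by
    have h := Nat.count_modEq_card n hm 0
    simp_rw [Nat.modEq_zero_iff_dvd] at h
    split_ifs at h <;> omega
  have hblock : Nat.count B.InBlock n ≤ n / m :=
    (Nat.le_div_iff_mul_le hm).2 (by linarith [B.mul_count_inBlock_le hm n])
  have hcover : Finset.range n ⊆ (Finset.range n).filter B.IsFree ∪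
      ((Finset.range n).filter (m ∣ ·) ∪ (Finset.range n).filter B.InBlock) := by
    intro p hp
    simp only [Finset.mem_union, Finset.mem_filter, IsFree]
    tauto
  have hsplit : n ≤ Nat.count B.IsFree n + (Nat.count (m ∣ ·) n + Nat.count B.InBlock n) := by
    simp only [Nat.count_eq_card_filter_range]
    calc n = (Finset.range n).card := (Finset.card_range n).symm
      _ ≤ _ := Finset.card_le_card hcover
      _ ≤ _ := (Finset.card_union_le _ _).trans (Nat.add_le_add_left (Finset.card_union_le _ _) _)
  omega

lemma infinite_setOf_isFree (hm : 3 ≤ m) : {p | B.IsFree p}.Infinite := by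
  intro hfin
  obtain ⟨N, hN⟩ : ∃ N, N = 3 * hfin.toFinset.card + 6 := ⟨_, rfl⟩
  have h₁ := B.le_count_isFree (by omega) N
  have h₂ : Nat.count B.IsFree N ≤ _ := Nat.count_le_card hfin N
  have h₃ : N / m ≤ N / 3 := Nat.div_le_div_left hm (by norm_num)
  omega

lemma abs_collapse_sub_le {x y : ℝ} {n : ℕ} (hagree : ∀ p < n, digits x 2 p = digits y 2 p) :
    |B.collapse x - B.collapse y| ≤ ((2 : ℝ) ^ Nat.count B.IsFree n)⁻¹ := by
  have := abs_ofDigits_sub_ofDigits_le (b := 2) (n := Nat.count B.IsFree n)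
    (x := fun i ↦ digits x 2 (Nat.nth B.IsFree i)) (y := fun i ↦ digits y 2 (Nat.nth B.IsFree i))
    fun i hi ↦ hagree _ (Nat.nth_lt_of_lt_count hi)
  simpa [collapse] using this

lemma holderOnWith_collapse (hm : 0 < m) {r : ℝ≥0} (hr : (r : ℝ) ≤ 1 - 2 / m) :
    HolderOnWith (2 ^ (m + 2)) r B.collapse B.moranSet := by
  refine holderOnWith_of_dist_le fun x hx y hy ↦ ?_
  by_cases hxy : digits x 2 = digits y 2
  · simp only [collapse, hxy, dist_self]
    positivity
  obtain ⟨n, hagree, hn⟩ :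
      ∃ n, (∀ p < n, digits x 2 p = digits y 2 p) ∧ digits x 2 n ≠ digits y 2 n := by
    have hex : ∃ n, digits x 2 n ≠ digits y 2 n := by
      by_contra! h
      exact hxy (funext h)
    exact ⟨Nat.find hex, fun p hp ↦ not_not.1 (Nat.find_min hex hp), Nat.find_spec hex⟩
  have hF : (r : ℝ) * n - 1 ≤ Nat.count B.IsFree n := by
    have h₁ : (n : ℝ) ≤ Nat.count B.IsFree n + 2 * (n / m : ℕ) + 1 := by
      exact_mod_cast B.le_count_isFree hm n
    have h₂ : ((n / m : ℕ) : ℝ) ≤ n / m := Nat.cast_div_le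
    have h₃ : (r : ℝ) * n ≤ (1 - 2 / m) * n := by gcongr
    have h₄ : (1 - 2 / (m : ℝ)) * n = n - 2 * (n / m) := by ring
    linarith
  have hr1 : (r : ℝ) ≤ 1 := hr.trans (by linarith [show (0 : ℝ) ≤ 2 / m by positivity])
  rw [Real.dist_eq, Real.dist_eq]
  push_cast
  exact (B.abs_collapse_sub_le hagree).trans (inv_two_pow_le_mul_rpow r.coe_nonneg hr1 hF
    (B.inv_two_pow_le_abs_sub hm hx hy hagree hn))

lemma Ico_subset_image_collapse (hm : 3 ≤ m) : Ico 0 1 ⊆ B.collapse '' B.moranSet := by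
  intro y hy
  have hinf := B.infinite_setOf_isFree hm
  let c : ℕ → Fin 2 := fun p ↦ digits y 2 (Nat.count B.IsFree p)
  refine ⟨ofDigits (B.fill c), B.ofDigits_fill_mem_moranSet (by omega) c, ?_⟩
  rw [collapse, digits_ofDigits (B.frequently_fill_eq_zero (by omega) c)]
  conv_rhs => rw [← ofDigits_digits one_lt_two hy]
  congr 1
  funext i
  have hfree := Nat.nth_mem_of_infinite (p := B.IsFree) hinf i
  simp only [c, fill, if_neg hfree.2, if_neg hfree.1,
    Nat.count_nth_of_infinite (p := B.IsFree) hinf]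

end FreeDigits

lemma le_dimH_moranSet (hm : 3 ≤ m) {r : ℝ≥0} (hr0 : 0 < r) (hr : (r : ℝ) ≤ 1 - 2 / m) :
    (r : ℝ≥0∞) ≤ dimH B.moranSet := by
  have h : (1 : ℝ≥0∞) ≤ dimH B.moranSet / r :=
    calc (1 : ℝ≥0∞) = dimH (Ico (0 : ℝ) 1) := by
          rw [Real.dimH_of_nonempty_interior (by simp)]
          simp
      _ ≤ dimH (B.collapse '' B.moranSet) := dimH_mono (B.Ico_subset_image_collapse hm)
      _ ≤ dimH B.moranSet / r := (B.holderOnWith_collapse (by omega) hr).dimH_image_le hr0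
  rwa [ENNReal.le_div_iff_mul_le (by simp [hr0.ne']) (by simp), one_mul] at h

lemma exists_next_block {φ : ℕ → ℝ} (htends : Tendsto φ atTop atTop)
    (hlimsup : limsup (fun n : ℕ ↦ (((n : ℝ) / φ n : ℝ) : EReal)) atTop = ⊤) (m k a : ℕ) :
    ∃ s ℓ : ℕ, a + m * (ℓ + 1) ≤ s ∧ (k + 1 : ℝ) * φ (s + ℓ) ≤ ℓ ∧
      (k + 1 : ℝ) * (a + m) ≤ φ s := by
  obtain ⟨N, hN⟩ := eventually_atTop.1 (htends.eventually_ge_atTop (max 1 ((k + 1) * (a + m))))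
  have hfreq : ∃ᶠ e : ℕ in atTop,
      (((4 * m + 4) * (k + 2) : ℝ) : EReal) < ((e / φ e : ℝ) : EReal) :=
    frequently_lt_of_lt_limsup (by isBoundedDefault) (hlimsup ▸ EReal.coe_lt_top _)
  obtain ⟨e, he, heN⟩ :=
    (hfreq.and_eventually (eventually_ge_atTop (2 * N + 4 * (a + m)))).exists
  have hφe : 1 ≤ φ e := (le_max_left _ _).trans (hN e (by omega))
  obtain ⟨ℓ, hℓ⟩ : ∃ ℓ, ℓ = ⌈(k + 1) * φ e⌉₊ := ⟨_, rfl⟩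
  have hℓe : 4 * (m * ℓ) + 4 * ℓ < e := by
    have h₁ : (ℓ : ℝ) < (k + 1) * φ e + 1 := hℓ ▸ Nat.ceil_lt_add_one (by positivity)
    have h₂ : (4 * m + 4) * (k + 2 : ℝ) * φ e < e := by
      rwa [EReal.coe_lt_coe_iff, lt_div_iff₀ (by linarith)] at he
    have h₃ : ((4 * (m * ℓ) + 4 * ℓ : ℕ) : ℝ) < e := by push_cast; nlinarith
    exact_mod_cast h₃
  have hmℓ : m * (ℓ + 1) = m * ℓ + m := by ring
  refine ⟨e - ℓ, ℓ, by omega, ?_, (le_max_right _ _).trans (hN _ (by omega))⟩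
  rw [Nat.sub_add_cancel (by omega), hℓ]
  exact Nat.le_ceil _

lemma exists_adapted {φ : ℕ → ℝ} (htends : Tendsto φ atTop atTop)
    (hlimsup : limsup (fun n : ℕ ↦ (((n : ℝ) / φ n : ℝ) : EReal)) atTop = ⊤) (m : ℕ) :
    ∃ B : BlockLayout m, B.Adapted φ := by
  choose s ℓ hsℓ hlong hshort using exists_next_block htends hlimsup m
  let blk : ℕ → ℕ × ℕ := fun k ↦ Nat.rec (0, 0) (fun k b ↦ (s k (b.1 + b.2), ℓ k (b.1 + b.2))) k
  have hsparse : ∀ k, m * ∑ j ∈ Finset.range (k + 1), (blk j).2 ≤ (blk k).1 := by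
    intro k
    induction k with
    | zero => simp [blk]
    | succ k ih =>
      have := hsℓ k ((blk k).1 + (blk k).2)
      rw [Finset.sum_range_succ, mul_add]
      change _ + m * ℓ k _ ≤ s k _
      nlinarith
  refine ⟨⟨fun k ↦ (blk k).1, fun k ↦ (blk k).2, rfl, fun k ↦ ?_, hsparse⟩,
    ⟨fun k ↦ ?_, fun k ↦ ?_⟩⟩
  · have := hsℓ k ((blk k).1 + (blk k).2)
    change _ ≤ s k _
    nlinarith
  · cases k with
    | zero => simp [blk]
    | succ k => exact_mod_cast hlong k ((blk k).1 + (blk k).2)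
  · exact_mod_cast hshort k ((blk k).1 + (blk k).2)

end BlockLayout

theorem dimH_Emax_eq_one_general (φ : ℕ → ℝ) (htends : Tendsto φ atTop atTop)
    (hlimsup : atTop.limsup (fun n : ℕ => (((n : ℝ) / φ n : ℝ) : EReal)) = ⊤) :
    dimH (Emax φ) = 1 := by
  refine le_antisymm ((dimH_mono (subset_univ _)).trans Real.dimH_univ.le) ?_
  refine ENNReal.le_of_forall_pos_nnreal_lt fun r hr0 hr1 ↦ ?_
  have hr1 : (r : ℝ) < 1 := by exact_mod_cast hr1
  obtain ⟨m, hm⟩ := exists_nat_gt (2 / (1 - r : ℝ))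
  have h2m : 2 < (m : ℝ) * (1 - r) := by rwa [div_lt_iff₀ (by linarith)] at hm
  have hm3 : 3 ≤ m := by
    have : (2 : ℝ) < m := by nlinarith [r.coe_nonneg]
    exact_mod_cast this
  have hrm : (r : ℝ) ≤ 1 - 2 / m := by
    rw [le_sub_comm, div_le_iff₀ (by positivity)]
    linarith
  obtain ⟨B, hB⟩ := BlockLayout.exists_adapted htends hlimsup m
  exact (B.le_dimH_moranSet hm3 hr0 hrm).trans
    (dimH_mono (hB.moranSet_subset_Emax (by omega) (htends.eventually_gt_atTop 0)))

theorem dimH_Emax_eq_one (φ : ℕ → ℝ) (hpos : ∀ n, 0 < φ n) (hmono : Monotone φ)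
    (htends : Tendsto φ atTop atTop)
    (hlimsup : atTop.limsup (fun n : ℕ => (((n : ℝ) / φ n : ℝ) : EReal)) = ⊤) :
    dimH (Emax φ) = 1 :=
  dimH_Emax_eq_one_general φ htends hlimsup
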